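/- arXiv:2410.00604 — 2 statements merged into one kernel-verified Lean document; each statement's English description precedes it below -/
import Mathlib

section
/- Let A be a residuated poset. The following conditions are equivalent: (1) x\x = x/x for all x ∈ A; (2) for every positive idempotent p and every a ∈ A, p\a = a if and only if a/p = a; (3) for every positive idempotent p and every a ∈ A, p·a = a if and only if a·p = a; (4) for every positive idempotent p and every a ∈ A, p\a = a/p; (5) for every positive idempotent p and every a ∈ A, p·a = a·p; (6) (x\x)·y = y·(x\x) for all x, y ∈ A; (7) (x/x)·y = y·(x/x) for all x, y ∈ A. -/
/-- A residuated poset: a partially ordered monoid with residuals `ld` (`x \ z`)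
and `rd` (`z / y`) satisfying the residuation law. -/
class ResiduatedPoset (α : Type*) extends PartialOrder α, Monoid α where
  ld : α → α → α
  rd : α → α → α
  mul_le_iff_le_rd : ∀ x y z : α, x * y ≤ z ↔ x ≤ rd z y
  mul_le_iff_le_ld : ∀ x y z : α, x * y ≤ z ↔ y ≤ ld x z

open ResiduatedPoset

section Aux
variable {α : Type*} [ResiduatedPoset α]

private lemma rp_mul_le_left {a b : α} (c : α) (h : a ≤ b) : c * a ≤ c * b :=
  (mul_le_iff_le_ld c a (c * b)).mpr
    (h.trans ((mul_le_iff_le_ld c b (c * b)).mp le_rfl))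

private lemma rp_mul_le_right {a b : α} (c : α) (h : a ≤ b) : a * c ≤ b * c :=
  (mul_le_iff_le_rd a c (b * c)).mpr
    (h.trans ((mul_le_iff_le_rd b c (b * c)).mp le_rfl))

private lemma rp_one_le_ld (x : α) : 1 ≤ ld x x :=
  (mul_le_iff_le_ld x 1 x).mp (by simp)

private lemma rp_one_le_rd (x : α) : 1 ≤ rd x x :=
  (mul_le_iff_le_rd 1 x x).mp (by simp)

private lemma rp_mul_ld_le (x : α) : x * ld x x ≤ x :=
  (mul_le_iff_le_ld x (ld x x) x).mpr le_rfl

private lemma rp_rd_mul_le (x : α) : rd x x * x ≤ x :=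
  (mul_le_iff_le_rd (rd x x) x x).mpr le_rfl

private lemma rp_ld_idem (x : α) : ld x x * ld x x = ld x x := by
  apply le_antisymm
  · refine (mul_le_iff_le_ld x (ld x x * ld x x) x).mp ?_
    calc x * (ld x x * ld x x) = (x * ld x x) * ld x x := by rw [mul_assoc]
      _ ≤ x * ld x x := rp_mul_le_right _ (rp_mul_ld_le x)
      _ ≤ x := rp_mul_ld_le x
  · calc ld x x = 1 * ld x x := (one_mul _).symm
      _ ≤ ld x x * ld x x := rp_mul_le_right _ (rp_one_le_ld x)

private lemma rp_rd_idem (x : α) : rd x x * rd x x = rd x x := by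
  apply le_antisymm
  · refine (mul_le_iff_le_rd (rd x x * rd x x) x x).mp ?_
    calc (rd x x * rd x x) * x = rd x x * (rd x x * x) := by rw [mul_assoc]
      _ ≤ rd x x * x := rp_mul_le_left _ (rp_rd_mul_le x)
      _ ≤ x := rp_rd_mul_le x
  · calc rd x x = rd x x * 1 := (mul_one _).symm
      _ ≤ rd x x * rd x x := rp_mul_le_left _ (rp_one_le_rd x)

private lemma rp_ld_le {p : α} (hp1 : 1 ≤ p) (a : α) : ld p a ≤ a :=
  calc ld p a = 1 * ld p a := (one_mul _).symm
    _ ≤ p * ld p a := rp_mul_le_right _ hp1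
    _ ≤ a := (mul_le_iff_le_ld p (ld p a) a).mpr le_rfl

private lemma rp_rd_le {p : α} (hp1 : 1 ≤ p) (a : α) : rd a p ≤ a :=
  calc rd a p = rd a p * 1 := (mul_one _).symm
    _ ≤ rd a p * p := rp_mul_le_left _ hp1
    _ ≤ a := (mul_le_iff_le_rd (rd a p) p a).mpr le_rfl

/-- For a positive element `p`, `p \ a = a ↔ p * a = a`. -/
private lemma rp_ld_eq_iff {p : α} (hp1 : 1 ≤ p) (a : α) :
    ld p a = a ↔ p * a = a := by
  constructor
  · intro h
    apply le_antisymm ((mul_le_iff_le_ld p a a).mpr h.ge)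
    calc a = 1 * a := (one_mul _).symm
      _ ≤ p * a := rp_mul_le_right _ hp1
  · intro h
    exact le_antisymm (rp_ld_le hp1 a) ((mul_le_iff_le_ld p a a).mp h.le)

private lemma rp_rd_eq_iff {p : α} (hp1 : 1 ≤ p) (a : α) :
    rd a p = a ↔ a * p = a := by
  constructor
  · intro h
    apply le_antisymm ((mul_le_iff_le_rd a p a).mpr h.ge)
    calc a = a * 1 := (mul_one _).symm
      _ ≤ a * p := rp_mul_le_left _ hp1
  · intro h
    exact le_antisymm (rp_rd_le hp1 a) ((mul_le_iff_le_rd a p a).mp h.le)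

/-- A positive idempotent equals `p \ p`. -/
private lemma rp_ld_self {p : α} (hp1 : 1 ≤ p) (hpp : p * p = p) : ld p p = p :=
  le_antisymm (rp_ld_le hp1 p) ((mul_le_iff_le_ld p p p).mp hpp.le)

private lemma rp_rd_self {p : α} (hp1 : 1 ≤ p) (hpp : p * p = p) : rd p p = p :=
  le_antisymm (rp_rd_le hp1 p) ((mul_le_iff_le_rd p p p).mp hpp.le)

end Aux

theorem stmt_7 {α : Type*} [ResiduatedPoset α] :
    [ (∀ x : α, ld x x = rd x x),
      (∀ p : α, 1 ≤ p → p * p = p → ∀ a : α, ld p a = a ↔ rd a p = a),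
      (∀ p : α, 1 ≤ p → p * p = p → ∀ a : α, p * a = a ↔ a * p = a),
      (∀ p : α, 1 ≤ p → p * p = p → ∀ a : α, ld p a = rd a p),
      (∀ p : α, 1 ≤ p → p * p = p → ∀ a : α, p * a = a * p),
      (∀ x y : α, (ld x x) * y = y * (ld x x)),
      (∀ x y : α, (rd x x) * y = y * (rd x x)) ].TFAE := by
  tfae_have 1 → 3 := by
    intro h p hp1 hpp a
    constructor
    · intro hpa
      have hp_le : p ≤ ld a a := (h a) ▸ (mul_le_iff_le_rd p a a).mp hpa.le
      apply le_antisymm ((mul_le_iff_le_ld a p a).mpr hp_le)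
      calc a = a * 1 := (mul_one _).symm
        _ ≤ a * p := rp_mul_le_left _ hp1
    · intro hap
      have hp_le : p ≤ rd a a := (h a) ▸ (mul_le_iff_le_ld a p a).mp hap.le
      apply le_antisymm ((mul_le_iff_le_rd p a a).mpr hp_le)
      calc a = 1 * a := (one_mul _).symm
        _ ≤ p * a := rp_mul_le_right _ hp1
  tfae_have 3 → 5 := by
    intro h p hp1 hpp a
    have h1 : p * (p * a) = p * a := by rw [← mul_assoc, hpp]
    have h2 : (a * p) * p = a * p := by rw [mul_assoc, hpp]
    have e1 : (p * a) * p = p * a := (h p hp1 hpp (p * a)).mp h1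
    have e2 : p * (a * p) = a * p := (h p hp1 hpp (a * p)).mpr h2
    calc p * a = (p * a) * p := e1.symm
      _ = p * (a * p) := by rw [mul_assoc]
      _ = a * p := e2
  tfae_have 5 → 1 := by
    intro h x
    apply le_antisymm
    · refine (mul_le_iff_le_rd (ld x x) x x).mp ?_
      calc ld x x * x = x * ld x x := (h _ (rp_one_le_ld x) (rp_ld_idem x) x).symm ▸ rfl
        _ ≤ x := rp_mul_ld_le x
    · refine (mul_le_iff_le_ld x (rd x x) x).mp ?_
      calc x * rd x x = rd x x * x := (h _ (rp_one_le_rd x) (rp_rd_idem x) x).symm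
        _ ≤ x := rp_rd_mul_le x
  tfae_have 5 → 4 := by
    intro h p hp1 hpp a
    apply le_antisymm
    · refine (mul_le_iff_le_rd (ld p a) p a).mp ?_
      calc ld p a * p = p * ld p a := (h p hp1 hpp (ld p a)).symm
        _ ≤ a := (mul_le_iff_le_ld p (ld p a) a).mpr le_rfl
    · refine (mul_le_iff_le_ld p (rd a p) a).mp ?_
      calc p * rd a p = rd a p * p := h p hp1 hpp (rd a p)
        _ ≤ a := (mul_le_iff_le_rd (rd a p) p a).mpr le_rfl
  tfae_have 4 → 2 := by
    intro h p hp1 hpp a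
    rw [h p hp1 hpp a]
  tfae_have 2 → 3 := by
    intro h p hp1 hpp a
    rw [← rp_ld_eq_iff hp1 a, ← rp_rd_eq_iff hp1 a]
    exact h p hp1 hpp a
  tfae_have 5 → 6 := by
    intro h x y
    exact h (ld x x) (rp_one_le_ld x) (rp_ld_idem x) y
  tfae_have 5 → 7 := by
    intro h x y
    exact h (rd x x) (rp_one_le_rd x) (rp_rd_idem x) y
  tfae_have 6 → 5 := by
    intro h p hp1 hpp a
    have := h p a
    rwa [rp_ld_self hp1 hpp] at this
  tfae_have 7 → 5 := by
    intro h p hp1 hpp a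
    have := h p a
    rwa [rp_rd_self hp1 hpp] at this
  tfae_finish
end

section
/- Let A be a balanced residuated poset. Then the set of positive idempotents of A is a join semilattice under the multiplication of A with least element 1, and its induced order is the restriction of the order of A. Precisely: for all positive idempotents p, q, r of A, the product p·q is again a positive idempotent, p·q = q·p, p ≤ p·q and q ≤ p·q, if p ≤ r and q ≤ r then p·q ≤ r, p ≤ q if and only if p·q = q, and 1 ≤ p. -/
open ResiduatedPoset

section aux
variable {α : Type*} [ResiduatedPoset α]

lemma rp_mul_le_mul_left {x y : α} (z : α) (h : x ≤ y) : x * z ≤ y * z := by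
  have := (mul_le_iff_le_rd y z (y * z)).mp le_rfl
  exact (mul_le_iff_le_rd x z (y * z)).mpr (le_trans h this)

lemma rp_mul_le_mul_right (z : α) {x y : α} (h : x ≤ y) : z * x ≤ z * y := by
  have := (mul_le_iff_le_ld z y (z * y)).mp le_rfl
  exact (mul_le_iff_le_ld z x (z * y)).mpr (le_trans h this)

lemma rp_mul_le_mul {x y z w : α} (h1 : x ≤ y) (h2 : z ≤ w) : x * z ≤ y * w :=
  le_trans (rp_mul_le_mul_left z h1) (rp_mul_le_mul_right y h2)

/-- key lemma: if p,q are positive idempotents then p*q = ld (p*q) (p*q). -/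
lemma rp_key {p q : α} (hbal : ∀ x : α, ld x x = rd x x)
    (hp : 1 ≤ p ∧ p * p = p) (hq : 1 ≤ q ∧ q * q = q) :
    p ≤ ld (p*q) (p*q) ∧ q ≤ ld (p*q) (p*q) ∧
    ld (p*q) (p*q) * ld (p*q) (p*q) = ld (p*q) (p*q) ∧ ld (p*q) (p*q) = p * q := by
  have hq' : q ≤ ld (p*q) (p*q) := by
    refine (mul_le_iff_le_ld (p*q) q (p*q)).mp (le_of_eq ?_)
    rw [mul_assoc, hq.2]
  have hp' : p ≤ ld (p*q) (p*q) := by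
    rw [hbal]
    refine (mul_le_iff_le_rd p (p*q) (p*q)).mp (le_of_eq ?_)
    rw [← mul_assoc, hp.2]
  have h1e : 1 ≤ ld (p*q) (p*q) := by
    refine (mul_le_iff_le_ld (p*q) 1 (p*q)).mp (le_of_eq (mul_one _))
  have hxe : (p*q) * ld (p*q) (p*q) ≤ p*q := (mul_le_iff_le_ld _ _ _).mpr le_rfl
  have hee : ld (p*q) (p*q) * ld (p*q) (p*q) = ld (p*q) (p*q) := by
    apply le_antisymm
    · refine (mul_le_iff_le_ld (p*q) _ (p*q)).mp ?_
      calc (p*q) * (ld (p*q) (p*q) * ld (p*q) (p*q))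
          = ((p*q) * ld (p*q) (p*q)) * ld (p*q) (p*q) := (mul_assoc _ _ _).symm
      _ ≤ (p*q) * ld (p*q) (p*q) := rp_mul_le_mul_left _ hxe
      _ ≤ p*q := hxe
    · calc ld (p*q) (p*q) = ld (p*q) (p*q) * 1 := (mul_one _).symm
      _ ≤ ld (p*q) (p*q) * ld (p*q) (p*q) := rp_mul_le_mul_right _ h1e
  have h1x : (1:α) ≤ p * q := by
    calc (1:α) = 1 * 1 := (mul_one 1).symm
    _ ≤ p * q := rp_mul_le_mul hp.1 hq.1
  have hex : ld (p*q) (p*q) = p*q := by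
    apply le_antisymm
    · have h2 : ld (p*q) (p*q) * (p*q) ≤ p*q := by
        rw [hbal]
        exact (mul_le_iff_le_rd _ _ _).mpr le_rfl
      calc ld (p*q) (p*q) = ld (p*q) (p*q) * 1 := (mul_one _).symm
      _ ≤ ld (p*q) (p*q) * (p*q) := rp_mul_le_mul_right _ h1x
      _ ≤ p*q := h2
    · calc p*q ≤ ld (p*q) (p*q) * ld (p*q) (p*q) := rp_mul_le_mul hp' hq'
      _ = ld (p*q) (p*q) := hee
  exact ⟨hp', hq', hee, hex⟩

end aux

theorem stmt_8 {α : Type*} [ResiduatedPoset α] (hbal : ∀ x : α, ld x x = rd x x)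
    (p q r : α) (hp : 1 ≤ p ∧ p * p = p) (hq : 1 ≤ q ∧ q * q = q) (hr : 1 ≤ r ∧ r * r = r) :
    (1 ≤ p * q ∧ (p * q) * (p * q) = p * q) ∧
    p * q = q * p ∧
    p ≤ p * q ∧
    q ≤ p * q ∧
    (p ≤ r → q ≤ r → p * q ≤ r) ∧
    (p ≤ q ↔ p * q = q) ∧
    1 ≤ p := by
  obtain ⟨hp1, hq1, hee, hex⟩ := rp_key hbal hp hq
  obtain ⟨hq2, hp2, hee', hex'⟩ := rp_key hbal hq hp
  have h1x : 1 ≤ p * q := by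
    calc (1:α) = 1 * 1 := (mul_one 1).symm
    _ ≤ p * q := rp_mul_le_mul hp.1 hq.1
  have hidem : (p * q) * (p * q) = p * q := by rw [← hex, hee]
  have hcomm : p * q = q * p := by
    apply le_antisymm
    · calc p * q ≤ ld (q*p) (q*p) * ld (q*p) (q*p) := rp_mul_le_mul hp2 hq2
      _ = q * p := by rw [hee', hex']
    · calc q * p ≤ ld (p*q) (p*q) * ld (p*q) (p*q) := rp_mul_le_mul hq1 hp1
      _ = p * q := by rw [hee, hex]
  have hppq : p ≤ p * q := by
    calc p = p * 1 := (mul_one p).symm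
    _ ≤ p * q := rp_mul_le_mul_right p hq.1
  have hqpq : q ≤ p * q := by
    calc q = 1 * q := (one_mul q).symm
    _ ≤ p * q := rp_mul_le_mul_left q hp.1
  refine ⟨⟨h1x, hidem⟩, hcomm, hppq, hqpq, ?_, ?_, hp.1⟩
  · intro h1 h2
    calc p * q ≤ r * r := rp_mul_le_mul h1 h2
    _ = r := hr.2
  · constructor
    · intro h
      apply le_antisymm
      · calc p * q ≤ q * q := rp_mul_le_mul_left q h
        _ = q := hq.2
      · exact hqpq
    · intro h
      rw [← h]; exact hppq
end
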